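/- Define the sequence of subspaces V₀ = ℝⁿ, V_{i+1} = [A;C]⁻¹((V_i ⊕ 0) + im[B;D]). Then (V_i) is monotonically non-increasing, and if V_h = V_{h+1} for some h, then V_j = V_h for all j ≥ h; moreover the limit V_h equals the largest (A,B,C,D)-output nulling subspace V*. -/

import Mathlib

/-!
The step map `W ↦ [A;C]⁻¹((W ⊕ 0) + im [B;D])` is monotone on subspaces, and a subspace is
output nulling exactly when it is a post-fixed point `W ≤ step W` (take `-u` for `u`). So the
sequence is the orbit of `⊤` under a monotone map: it decreases, an equality `V h = V (h+1)` makes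
`V h` a fixed point, and every post-fixed point `W ≤ step W` lies below all iterates `step^[i] ⊤`,
since `W ≤ step^[i] W ≤ step^[i] ⊤`.
-/

open Function

theorem Monotone.le_iterate_top_of_le_map {α : Type*} [Preorder α] [OrderTop α] {f : α → α}
    (hf : Monotone f) {a : α} (ha : a ≤ f a) (n : ℕ) : a ≤ f^[n] ⊤ :=
  (hf.monotone_iterate_of_le_map ha (Nat.zero_le n)).trans (hf.iterate n le_top)

theorem Function.iterate_eq_of_iterate_succ_eq {α : Type*} {f : α → α} {x : α} {h : ℕ}
    (hh : f^[h] x = f^[h + 1] x) {j : ℕ} (hj : h ≤ j) : f^[j] x = f^[h] x := by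
  have hfix : IsFixedPt f (f^[h] x) := by
    rw [IsFixedPt, ← iterate_succ_apply' f h x, hh]
  obtain ⟨k, rfl⟩ := Nat.exists_eq_add_of_le hj
  rw [add_comm, iterate_add_apply]
  exact (hfix.iterate k).eq

section OutputNulling

variable {R M U Y : Type*} [Ring R] [AddCommGroup M] [Module R M] [AddCommGroup U] [Module R U]
  [AddCommGroup Y] [Module R Y] (A : M →ₗ[R] M) (B : U →ₗ[R] M) (C : M →ₗ[R] Y) (D : U →ₗ[R] Y)

def outputNullingStep (W : Submodule R M) : Submodule R M :=
  (W.prod ⊥ ⊔ LinearMap.range (B.prod D)).comap (A.prod C)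

def IsOutputNulling (W : Submodule R M) : Prop :=
  ∀ x ∈ W, ∃ u, A x + B u ∈ W ∧ C x + D u = 0

variable {A B C D}

theorem mem_outputNullingStep {W : Submodule R M} {x : M} :
    x ∈ outputNullingStep A B C D W ↔ ∃ v ∈ W, ∃ u, A x = v + B u ∧ C x = D u := by
  rw [outputNullingStep, Submodule.mem_comap, Submodule.mem_sup]
  constructor
  · rintro ⟨⟨v, y⟩, ⟨hv, rfl : y = 0⟩, _, ⟨u, rfl⟩, hx⟩
    rw [Prod.ext_iff] at hx
    exact ⟨v, hv, u, by simpa using hx.1.symm, by simpa using hx.2.symm⟩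
  · rintro ⟨v, hv, u, hA, hC⟩
    exact ⟨(v, 0), ⟨hv, rfl⟩, _, ⟨u, rfl⟩, by ext <;> simp [hA, hC]⟩

variable (A B C D) in
theorem outputNullingStep_mono : Monotone (outputNullingStep A B C D) :=
  fun _ _ hW => Submodule.comap_mono (sup_le_sup_right (Submodule.prod_mono hW le_rfl) _)

theorem isOutputNulling_iff_le_outputNullingStep {W : Submodule R M} :
    IsOutputNulling A B C D W ↔ W ≤ outputNullingStep A B C D W := by
  simp only [IsOutputNulling, SetLike.le_def, mem_outputNullingStep]
  refine forall₂_congr fun x _ => ⟨?_, ?_⟩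
  · rintro ⟨u, hW, hC⟩
    exact ⟨A x + B u, hW, -u, by simp, by simpa [eq_neg_iff_add_eq_zero] using hC⟩
  · rintro ⟨v, hv, u, hA, hC⟩
    exact ⟨-u, by simpa [hA] using hv, by simp [hC]⟩

end OutputNulling

/-- The sequence `V₀ = ℝⁿ`, `V_{i+1} = [A;C]⁻¹((V_i ⊕ 0) + im [B;D])` is
non-increasing, stabilizes once two consecutive terms agree, and its limit is
the largest `(A,B,C,D)`-output nulling subspace. -/
theorem stmt16 {n m p : ℕ}
    (A : Matrix (Fin n) (Fin n) ℝ) (B : Matrix (Fin n) (Fin m) ℝ)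
    (C : Matrix (Fin p) (Fin n) ℝ) (D : Matrix (Fin p) (Fin m) ℝ)
    (V : ℕ → Submodule ℝ (Fin n → ℝ))
    (hV0 : V 0 = ⊤)
    (hVsucc : ∀ i : ℕ, ∀ x : Fin n → ℝ, x ∈ V (i + 1) ↔
      ∃ v ∈ V i, ∃ u : Fin m → ℝ,
        A.mulVec x = v + B.mulVec u ∧ C.mulVec x = D.mulVec u) :
    (∀ i : ℕ, V (i + 1) ≤ V i) ∧
    (∀ h : ℕ, V h = V (h + 1) →
      (∀ j : ℕ, h ≤ j → V j = V h) ∧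
      (∀ x ∈ V h, ∃ u : Fin m → ℝ,
        A.mulVec x + B.mulVec u ∈ V h ∧ C.mulVec x + D.mulVec u = 0) ∧
      (∀ W : Submodule ℝ (Fin n → ℝ),
        (∀ x ∈ W, ∃ u : Fin m → ℝ,
          A.mulVec x + B.mulVec u ∈ W ∧ C.mulVec x + D.mulVec u = 0) → W ≤ V h)) := by
  set step := outputNullingStep A.mulVecLin B.mulVecLin C.mulVecLin D.mulVecLin
  have hnulling : ∀ W, IsOutputNulling A.mulVecLin B.mulVecLin C.mulVecLin D.mulVecLin W ↔
      W ≤ step W := fun _ => isOutputNulling_iff_le_outputNullingStep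
  have hmono : Monotone step := outputNullingStep_mono _ _ _ _
  have hV : V = fun i => step^[i] ⊤ := by
    funext i
    induction i with
    | zero => exact hV0
    | succ i ih =>
      rw [iterate_succ_apply', ← ih]
      ext x
      rw [mem_outputNullingStep]
      exact hVsucc i x
  subst hV
  refine ⟨fun i => hmono.antitone_iterate_of_map_le le_top (Nat.le_succ i), fun h hh => ?_⟩
  refine ⟨fun j hj => iterate_eq_of_iterate_succ_eq hh hj, ?_, fun W hW => ?_⟩
  · exact (hnulling _).2 (hh.trans (iterate_succ_apply' step h ⊤)).le
  · exact hmono.le_iterate_top_of_le_map ((hnulling W).1 hW) h
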